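/- arXiv:math/0401232 — 5 statements merged into one kernel-verified Lean document; each statement's English description precedes it below -/
import Mathlib

section
/- Let $p$ be a prime, $V$ a nonzero finite-dimensional vector space over an algebraically closed field $k$ of characteristic zero, and $T$ a linear endomorphism of $V$ with $T^p = \mathrm{id}$ and $\mathrm{Tr}(T) = 0$. Let $q \in k$ be a primitive $p$-th root of unity and let $V(i)$ denote the eigenspace of $T$ for the eigenvalue $q^i$. Then $\dim V(i)$ is independent of $i$ for $0 \le i \le p-1$; in particular $p$ divides $\dim V$. -/
open Polynomial Module Module.End LinearMap

theorem stmt_0 {k : Type*} [Field k] [IsAlgClosed k] [CharZero k]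
    {V : Type*} [AddCommGroup V] [Module k V] [FiniteDimensional k V]
    (hV : Module.finrank k V ≠ 0)
    (p : ℕ) (hp : p.Prime) (q : k) (hq : IsPrimitiveRoot q p)
    (T : Module.End k V) (hT : T ^ p = 1) (htr : LinearMap.trace k V T = 0) :
    (∀ i j : ℕ, i < p → j < p →
      Module.finrank k (Module.End.eigenspace T (q ^ i)) =
        Module.finrank k (Module.End.eigenspace T (q ^ j))) ∧
    p ∣ Module.finrank k V := by
  classical
  have hp1 : 1 < p := hp.one_lt
  have hp0 : 0 < p := hp.pos
  haveI : NeZero p := ⟨hp0.ne'⟩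
  -- T is semisimple
  have hsf : Squarefree (X ^ p - C (1:k)) :=
    (Polynomial.separable_X_pow_sub_C (1:k)
      (Nat.cast_ne_zero.mpr hp0.ne') one_ne_zero).squarefree
  have haev : Polynomial.aeval T (X ^ p - C (1:k)) = 0 := by
    simp [hT]
  have hss : T.IsSemisimple :=
    Module.End.isSemisimple_of_squarefree_aeval_eq_zero hsf haev
  have heq : ∀ μ : k, T.maxGenEigenspace μ = T.eigenspace μ :=
    hss.isFinitelySemisimple.maxGenEigenspace_eq_eigenspace
  -- eigenvalues are p-th roots of unity
  have hpow : ∀ μ : k, T.eigenspace μ ≠ ⊥ → μ ^ p = 1 := by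
    intro μ h
    obtain ⟨v, hv, hv0⟩ := (Submodule.ne_bot_iff _).mp h
    have hTv : T v = μ • v := mem_eigenspace_iff.mp hv
    have hpv : ∀ n : ℕ, (T ^ n) v = μ ^ n • v := by
      intro n
      induction n with
      | zero => simp
      | succ n ih =>
        rw [pow_succ, Module.End.mul_apply, hTv, map_smul, ih, smul_smul, ← pow_succ']
    have h1 : μ ^ p • v = v := by rw [← hpv, hT, Module.End.one_apply]
    have h2 : (μ ^ p - 1) • v = 0 := by rw [sub_smul, one_smul, h1, sub_self]
    rcases smul_eq_zero.mp h2 with h3 | h3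
    · exact sub_eq_zero.mp h3
    · exact absurd h3 hv0
  set N : Fin p → Submodule k V := fun i => T.eigenspace (q ^ (i:ℕ)) with hNdef
  have hInd : iSupIndep N :=
    T.eigenspaces_iSupIndep.comp (fun i j hij => Fin.ext (hq.pow_inj i.2 j.2 hij))
  have hTop : ⨆ i, N i = ⊤ := by
    rw [eq_top_iff, ← T.iSup_maxGenEigenspace_eq_top]
    refine iSup_le fun μ => ?_
    rw [heq μ]
    rcases eq_or_ne (T.eigenspace μ) ⊥ with h | h
    · simp [h]
    · obtain ⟨i, hi, hqi⟩ := hq.eq_pow_of_pow_eq_one (hpow μ h)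
      have : T.eigenspace μ = N ⟨i, hi⟩ := by rw [hNdef]; simp [hqi]
      rw [this]
      exact le_iSup N ⟨i, hi⟩
  have hInternal : DirectSum.IsInternal N :=
    DirectSum.isInternal_submodule_of_iSupIndep_of_iSup_eq_top hInd hTop
  have hMaps : ∀ i, Set.MapsTo T (N i) (N i) := by
    intro i x hx
    have hx' : T x = (q ^ (i:ℕ)) • x := mem_eigenspace_iff.mp hx
    show T x ∈ N i
    rw [hx']
    exact Submodule.smul_mem _ _ hx
  set D : ℕ → ℕ := fun i => Module.finrank k (T.eigenspace (q ^ i)) with hDdef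
  -- trace computation
  have hres : ∀ i, T.restrict (hMaps i) = (q ^ (i:ℕ)) • (1 : Module.End k (N i)) := by
    intro i
    apply LinearMap.ext; intro x
    apply Subtype.ext
    simp only [LinearMap.restrict_coe_apply, LinearMap.smul_apply, Module.End.one_apply,
      SetLike.val_smul]
    exact mem_eigenspace_iff.mp x.2
  have htrace : ∑ i ∈ Finset.range p, (D i : k) * q ^ i = 0 := by
    have h1 := LinearMap.trace_eq_sum_trace_restrict hInternal hMaps
    rw [htr] at h1
    have h2 : ∀ i : Fin p,
        LinearMap.trace k (N i) (T.restrict (hMaps i)) = (D (i:ℕ) : k) * q ^ (i:ℕ) := by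
      intro i
      rw [hres i, map_smul, LinearMap.trace_one, smul_eq_mul, mul_comm]
    rw [← Fin.sum_univ_eq_sum_range (fun i => (D i : k) * q ^ i) p]
    simp_rw [← h2]
    exact h1.symm
  -- dimension computation
  have hdim : Module.finrank k V = ∑ i ∈ Finset.range p, D i := by
    have hMaps1 : ∀ i, Set.MapsTo (1 : Module.End k V) (N i) (N i) := fun i x hx => hx
    have h1 := LinearMap.trace_eq_sum_trace_restrict hInternal hMaps1
    have h2 : ∀ i : Fin p, (1 : Module.End k V).restrict (hMaps1 i) = 1 := by
      intro i
      apply LinearMap.ext; intro x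
      exact Subtype.ext rfl
    rw [LinearMap.trace_one] at h1
    simp_rw [h2, LinearMap.trace_one] at h1
    have h3 : (Module.finrank k V : k) = ((∑ i ∈ Finset.range p, D i : ℕ) : k) := by
      rw [h1]
      push_cast
      rw [← Fin.sum_univ_eq_sum_range (fun i => (D i : k)) p]
    exact_mod_cast h3
  -- number theory: all D i equal for i < p
  set a : ℕ → ℚ := fun i => (D i : ℚ) - (D (p-1) : ℚ) with hadef
  have hsum_a : ∑ i ∈ Finset.range p, (algebraMap ℚ k (a i)) * q ^ i = 0 := by
    have hgeom : ∑ i ∈ Finset.range p, q ^ i = 0 := hq.geom_sum_eq_zero hp1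
    have : ∀ i, (algebraMap ℚ k (a i)) * q ^ i
        = (D i : k) * q ^ i - (D (p-1) : k) * q ^ i := by
      intro i
      rw [hadef]
      push_cast
      ring
    simp_rw [this]
    rw [Finset.sum_sub_distrib, htrace, ← Finset.mul_sum, hgeom, mul_zero, sub_zero]
  set P : ℚ[X] := ∑ i ∈ Finset.range (p-1), Polynomial.monomial i (a i) with hPdef
  have haP : Polynomial.aeval q P = 0 := by
    rw [hPdef, map_sum]
    have h1 : ∀ i, Polynomial.aeval q (Polynomial.monomial i (a i))
        = (algebraMap ℚ k (a i)) * q ^ i := by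
      intro i; rw [Polynomial.aeval_monomial]
    simp_rw [h1]
    have hlast : a (p-1) = 0 := by simp [hadef]
    have hsplit : ∑ i ∈ Finset.range p, (algebraMap ℚ k (a i)) * q ^ i
        = (∑ i ∈ Finset.range (p-1), (algebraMap ℚ k (a i)) * q ^ i)
          + (algebraMap ℚ k (a (p-1))) * q ^ (p-1) := by
      conv_lhs => rw [show p = (p-1) + 1 from (Nat.succ_pred_eq_of_pos hp0).symm]
      rw [Finset.sum_range_succ]
    rw [hsplit, hlast] at hsum_a
    simpa using hsum_a
  have hP0 : P = 0 := by
    by_contra hne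
    have hdegP : P.degree ≤ ((p - 2 : ℕ) : WithBot ℕ) := by
      rw [hPdef]
      refine (Polynomial.degree_sum_le _ _).trans ?_
      refine Finset.sup_le fun i hi => ?_
      refine (Polynomial.degree_monomial_le i (a i)).trans ?_
      have hi' : i < p - 1 := Finset.mem_range.mp hi
      exact_mod_cast (show i ≤ p - 2 by omega)
    have hmin := minpoly.degree_le_of_ne_zero ℚ q hne haP
    rw [← Polynomial.cyclotomic_eq_minpoly_rat hq hp0, Polynomial.degree_cyclotomic,
      Nat.totient_prime hp] at hmin
    have : ((p - 1 : ℕ) : WithBot ℕ) ≤ ((p - 2 : ℕ) : WithBot ℕ) := hmin.trans hdegP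
    have : (p - 1 : ℕ) ≤ p - 2 := by exact_mod_cast this
    omega
  have hDeq : ∀ i, i < p → D i = D (p - 1) := by
    intro i hi
    rcases eq_or_ne i (p-1) with rfl | hne
    · rfl
    have hi' : i < p - 1 := by omega
    have hc : P.coeff i = a i := by
      rw [hPdef, Polynomial.finset_sum_coeff]
      simp_rw [Polynomial.coeff_monomial]
      rw [Finset.sum_ite_eq' (Finset.range (p-1)) i a]
      simp [Finset.mem_range.mpr hi']
    rw [hP0] at hc
    have h5 : (D i : ℚ) - (D (p-1) : ℚ) = 0 := by simpa [hadef] using hc.symm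
    have h6 : (D i : ℚ) = (D (p-1) : ℚ) := by linarith
    exact_mod_cast h6
  constructor
  · intro i j hi hj
    rw [show Module.finrank k (T.eigenspace (q ^ i)) = D i from rfl,
      show Module.finrank k (T.eigenspace (q ^ j)) = D j from rfl,
      hDeq i hi, hDeq j hj]
  · rw [hdim]
    have : ∑ i ∈ Finset.range p, D i = p * D (p-1) := by
      rw [Finset.sum_congr rfl (fun i hi => hDeq i (Finset.mem_range.mp hi))]
      simp [mul_comm]
    rw [this]
    exact Dvd.intro _ rfl
end

section
/- Let $p$ be an odd prime and $V$ a vector space of dimension $p$ over an algebraically closed field $k$ of characteristic zero. If $T$ is a linear endomorphism of $V$ with $T^{2p} = \mathrm{id}$ and $\mathrm{Tr}(T) = 0$, then $T^p = \mathrm{id}$ or $T^p = -\mathrm{id}$. -/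
/-!
The `p` roots `μ` of the characteristic polynomial of `T` are eigenvalues, so `μ ^ (2p) = 1` and
each is `±ζ ^ j` for a fixed primitive `p`-th root of unity `ζ`. Their sum is `tr T = 0`, a
relation `∑ a_j ζ ^ j = 0` with integer coefficients `a_j`, the signed multiplicities. As the
cyclotomic polynomial `1 + X + ⋯ + X ^ (p - 1)` is the minimal polynomial of `ζ`, all `a_j` equal
some `c`. Summing the `p` signs gives `p c`; since `p` is odd this forces `c = ±1` and all signs
equal `c`, so `μ ^ p = c` for every eigenvalue. Finally `(T ^ p - c) (T ^ p + c) = 0` and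
`T ^ p + c` is invertible by the spectral mapping theorem, so `T ^ p = c`.
-/

open Polynomial Finset

theorem IsPrimitiveRoot.forall_eq_of_sum_mul_pow_eq_zero {K : Type*} [Field K] [CharZero K]
    {p : ℕ} [hp : Fact p.Prime] {ζ : K} (hζ : IsPrimitiveRoot ζ p) {a : ℕ → ℤ}
    (h : ∑ i ∈ range p, (a i : K) * ζ ^ i = 0) : ∀ i < p, a i = a 0 := by
  set q : ℤ[X] := ∑ i ∈ range p, C (a i) * X ^ i
  have hcoeff : ∀ i < p, q.coeff i = a i := fun i hi => by
    simp [q, coeff_X_pow, hi]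
  have hq : q = C q.leadingCoeff * cyclotomic p ℤ := by
    refine eq_leadingCoeff_mul_of_monic_of_dvd_of_natDegree_le (cyclotomic.monic p ℤ) ?_ ?_
    · rw [cyclotomic_eq_minpoly hζ hp.out.pos]
      exact minpoly.isIntegrallyClosed_dvd (hζ.isIntegral hp.out.pos) (by simpa [q] using h)
    · rw [natDegree_cyclotomic, Nat.totient_prime hp.out]
      refine natDegree_sum_le_of_forall_le _ _ fun i hi => ?_
      exact (natDegree_C_mul_X_pow_le _ _).trans (Nat.le_sub_one_of_lt (mem_range.mp hi))
  intro i hi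
  rw [← hcoeff i hi, ← hcoeff 0 hp.out.pos, hq, cyclotomic_prime]
  simp [coeff_X_pow, hi, hp.out.pos]

theorem IsPrimitiveRoot.exists_eq_sign_mul_pow {K : Type*} [Field K] {p : ℕ} [NeZero p]
    (hodd : Odd p) {ζ : K} (hζ : IsPrimitiveRoot ζ p) {μ : K} (hμ : μ ^ (2 * p) = 1) :
    ∃ ε : ℤ, (ε = 1 ∨ ε = -1) ∧ ∃ i < p, μ = ε * ζ ^ i := by
  have hsq : (μ ^ p) ^ 2 = 1 := by rw [← pow_mul, mul_comm, hμ]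
  rcases sq_eq_one_iff.mp hsq with h | h
  · obtain ⟨i, hi, rfl⟩ := hζ.eq_pow_of_pow_eq_one h
    exact ⟨1, .inl rfl, i, hi, by simp⟩
  · have hneg : (-μ) ^ p = 1 := by rw [hodd.neg_pow, h, neg_neg]
    obtain ⟨i, hi, hζi⟩ := hζ.eq_pow_of_pow_eq_one hneg
    exact ⟨-1, .inr rfl, i, hi, by simp [hζi]⟩

theorem Int.forall_eq_of_sum_eq_card_mul {ι : Type*} [Fintype ι] {ε : ι → ℤ}
    (hε : ∀ i, ε i = 1 ∨ ε i = -1) (hodd : Odd (Fintype.card ι)) {c : ℤ}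
    (hsum : ∑ i, ε i = Fintype.card ι * c) : ∀ i, ε i = c := by
  have habs : ∀ i, |ε i| = 1 := fun i => by rcases hε i with h | h <;> simp [h]
  have hbound : |(Fintype.card ι : ℤ) * c| ≤ Fintype.card ι := by
    rw [← hsum]
    exact (abs_sum_le_sum_abs _ _).trans_eq (by simp [habs])
  have hodd_sum : Odd (∑ i, ε i) := by
    have : ∑ i, ε i = Fintype.card ι - ∑ i, (1 - ε i) := by simp
    rw [this]
    refine hodd.natCast.sub_even (even_sum _ fun i _ => ?_)
    rcases hε i with h | h <;> simp [h]
  have hc : c = 1 ∨ c = -1 := by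
    rw [hsum, Int.odd_mul] at hodd_sum
    have hpos : (0 : ℤ) < Fintype.card ι := by exact_mod_cast hodd.pos
    rw [abs_mul, abs_of_pos hpos] at hbound
    have := abs_le.mp (le_of_mul_le_mul_left (hbound.trans_eq (mul_one _).symm) hpos)
    rcases hodd_sum.2 with ⟨m, hm⟩
    omega
  have hle : ∀ i ∈ univ, c * ε i ≤ 1 := fun i _ => by
    rcases hc with rfl | rfl <;> rcases hε i with h | h <;> simp [h]
  have heq : ∑ i, c * ε i = ∑ i : ι, 1 := by
    rw [← mul_sum, hsum]; rcases hc with rfl | rfl <;> simp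
  intro i
  have := (sum_eq_sum_iff_of_le hle).mp heq i (mem_univ i)
  rcases hc with rfl | rfl <;> linarith

theorem exists_forall_pow_eq_of_sum_eq_zero {k ι : Type*} [Field k] [CharZero k]
    [IsAlgClosed k] [Fintype ι] {p : ℕ} [hp : Fact p.Prime] (hodd : Odd p)
    (hcard : Fintype.card ι = p)
    {μ : ι → k} (hμ : ∀ i, μ i ^ (2 * p) = 1) (hsum : ∑ i, μ i = 0) :
    ∃ ε : k, ε ^ 2 = 1 ∧ ∀ i, μ i ^ p = ε := by
  have : NeZero (p : k) := ⟨by exact_mod_cast hp.out.ne_zero⟩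
  obtain ⟨ζ, hζ⟩ := HasEnoughRootsOfUnity.exists_primitiveRoot k p
  choose ε hε idx hidx hμε using fun i => hζ.exists_eq_sign_mul_pow hodd (hμ i)
  have hpow : ∀ i, μ i ^ p = ε i := fun i => by
    rw [hμε, mul_pow, ← pow_mul, mul_comm (idx i), pow_mul, hζ.pow_eq_one, one_pow, mul_one]
    rcases hε i with h | h <;> simp [h, hodd.neg_one_pow]
  set a : ℕ → ℤ := fun j => ∑ i with idx i = j, ε i
  have hmaps : ∀ i ∈ univ, idx i ∈ range p := fun i _ => mem_range.mpr (hidx i)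
  have hconst : ∀ j < p, a j = a 0 := by
    refine hζ.forall_eq_of_sum_mul_pow_eq_zero ?_
    rw [← hsum, ← sum_fiberwise_of_maps_to hmaps]
    refine sum_congr rfl fun j _ => ?_
    simp only [a, Int.cast_sum, sum_mul]
    refine sum_congr rfl fun i hi => ?_
    rw [hμε, (mem_filter.mp hi).2]
  have hsign : ∀ i, ε i = a 0 := by
    refine Int.forall_eq_of_sum_eq_card_mul hε (hcard ▸ hodd) ?_
    rw [← sum_fiberwise_of_maps_to hmaps, hcard,
      sum_congr rfl fun j hj => hconst j (mem_range.mp hj)]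
    simp
  obtain ⟨i₀⟩ : Nonempty ι := Fintype.card_pos_iff.mp (hcard ▸ hp.out.pos)
  refine ⟨μ i₀ ^ p, by rw [← pow_mul, mul_comm, hμ], fun i => ?_⟩
  rw [hpow, hpow, hsign, hsign]

theorem pow_eq_algebraMap_of_forall_mem_spectrum_pow_eq {𝕜 A : Type*} [Field 𝕜] [CharZero 𝕜]
    [IsAlgClosed 𝕜] [Ring A] [Algebra 𝕜 A] {a : A} {n : ℕ} (hn : 0 < n) (ha : a ^ (2 * n) = 1)
    {ε : 𝕜} (hε : ε ^ 2 = 1) (hσ : ∀ μ ∈ spectrum 𝕜 a, μ ^ n = ε) :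
    a ^ n = algebraMap 𝕜 A ε := by
  have hunit : IsUnit (algebraMap 𝕜 A (-ε) - a ^ n) := by
    rw [← spectrum.notMem_iff, spectrum.map_pow_of_pos a hn]
    rintro ⟨μ, hμ, hμε⟩
    have hμε : μ ^ n = -ε := hμε
    have : ε = 0 := neg_eq_self.mp (hμε.symm.trans (hσ μ hμ))
    simp [this] at hε
  set e := algebraMap 𝕜 A ε
  have hsq : a ^ n * a ^ n = e * e := by
    rw [← pow_add, ← two_mul, ha, ← map_mul, ← sq, hε, map_one]
  have hprod : (a ^ n - e) * (algebraMap 𝕜 A (-ε) - a ^ n) = 0 := by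
    have hcomm : e * a ^ n = a ^ n * e := Algebra.commutes ε _
    calc _ = e * e - a ^ n * a ^ n + (e * a ^ n - a ^ n * e) := by rw [map_neg]; noncomm_ring
      _ = 0 := by rw [hsq, hcomm, sub_self, sub_self, add_zero]
  exact sub_eq_zero.mp (hunit.mul_left_eq_zero.mp hprod)

theorem stmt_1 {k : Type*} [Field k] [IsAlgClosed k] [CharZero k]
    {V : Type*} [AddCommGroup V] [Module k V]
    (p : ℕ) (hp : p.Prime) (hodd : Odd p)
    (hdim : Module.finrank k V = p)
    (T : Module.End k V) (hT : T ^ (2 * p) = 1) (htr : LinearMap.trace k V T = 0) :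
    T ^ p = 1 ∨ T ^ p = -1 := by
  classical
  have : Fact p.Prime := ⟨hp⟩
  have : FiniteDimensional k V := Module.finite_of_finrank_pos (hdim ▸ hp.pos)
  have : Nontrivial V := Module.nontrivial_of_finrank_pos (hdim ▸ hp.pos)
  have hspec : ∀ μ ∈ spectrum k T, μ ^ (2 * p) = 1 := fun μ hμ => by
    simpa [hT, spectrum.one_eq] using spectrum.pow_mem_pow T (2 * p) hμ
  have hroots : ∀ μ, μ ∈ T.charpoly.roots ↔ μ ∈ spectrum k T := fun μ => by
    rw [Module.End.mem_spectrum_iff_isRoot_charpoly, mem_roots T.charpoly_monic.ne_zero]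
  obtain ⟨ε, hε, hpow⟩ := exists_forall_pow_eq_of_sum_eq_zero
    (μ := fun x : T.charpoly.roots.ToType => (x : k)) hodd
    (by simp [IsAlgClosed.card_roots_eq_natDegree, LinearMap.charpoly_natDegree, hdim])
    (fun μ => hspec _ ((hroots _).mp Multiset.coe_mem))
    (by rw [← Multiset.sum_eq_sum_coe,
      ← Module.End.trace_eq_sum_roots_charpoly_of_splits (IsAlgClosed.splits _), htr])
  have hTp := pow_eq_algebraMap_of_forall_mem_spectrum_pow_eq hp.pos hT hε fun μ hμ =>
    hpow (T.charpoly.roots.mkToType μ ⟨0, Multiset.count_pos.mpr ((hroots μ).mpr hμ)⟩)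
  rcases sq_eq_one_iff.mp hε with rfl | rfl
  · exact .inl (by simpa using hTp)
  · exact .inr (by simpa using hTp)
end

section
/- Let $p$ be an odd prime, $n \ge 1$, and let $\omega$ be a primitive $p^n$-th root of unity in an algebraically closed field $k$ of characteristic zero. If $V$ is a $k$-vector space of dimension $p$ and $T$ is a linear endomorphism of $V$ with $T^{2p^n} = \mathrm{id}$ and $\mathrm{Tr}(T) = 0$, then there exists $m$ with $0 \le m \le p^{n-1}-1$ such that $T^p = \omega^{mp}\,\mathrm{id}$ or $T^p = -\omega^{mp}\,\mathrm{id}$. -/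
/-!
Since `p ^ n` is odd, each eigenvalue of `T` is `±ω ^ j` with `j < p ^ n`. Recording these signed
exponents gives an integer polynomial `P` of degree `< p ^ n` with `P(ω) = 0`, nonzero because
`P(1)` is a sum of `p` odd numbers. Divisibility by `Φ_{p^n}`, i.e.
`(X ^ p ^ (n - 1) - 1) * P = (X ^ p ^ n - 1) * Q` with `deg Q < p ^ (n - 1)`, makes the coefficients
of `P` periodic of period `p ^ (n - 1)`, so a nonzero coefficient at `r` gives `p` nonzero
coefficients at `r + i * p ^ (n - 1)`. As `P` has only `p` terms, the eigenvalues are exactly the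
`s * ω ^ (r + i * p ^ (n - 1))`, `i < p`, for one sign `s`: they are distinct with common `p`-th
power `s * ω ^ (r * p)`, so the characteristic polynomial is `X ^ p - s * ω ^ (r * p)` and
Cayley–Hamilton concludes.
-/

open Polynomial

theorem Multiset.odd_sum_iff_odd_card {s : Multiset ℤ} (hs : ∀ a ∈ s, Odd a) :
    Odd s.sum ↔ Odd (Multiset.card s) := by
  induction s using Multiset.induction_on with
  | empty => simp
  | cons a s ih =>
    simp only [Multiset.forall_mem_cons] at hs
    simp [Int.odd_add', ih hs.2, Int.not_even_iff_odd.2 hs.1, Nat.odd_add_one]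

namespace Polynomial

variable {R : Type*}

noncomputable def sumMonomials [Semiring R] (A : Multiset (R × ℕ)) : R[X] :=
  (A.map fun a => monomial a.2 a.1).sum

theorem coeff_sumMonomials [Semiring R] (A : Multiset (R × ℕ)) (b : ℕ) :
    (sumMonomials A).coeff b = ((A.filter (·.2 = b)).map Prod.fst).sum := by
  induction A using Multiset.induction_on with
  | empty => simp [sumMonomials]
  | cons a A ih =>
    rw [sumMonomials] at ih
    by_cases h : a.2 = b <;> simp [sumMonomials, coeff_monomial, h, ih]

theorem mem_map_snd_of_coeff_sumMonomials_ne_zero [Semiring R] {A : Multiset (R × ℕ)} {b : ℕ}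
    (h : (sumMonomials A).coeff b ≠ 0) : b ∈ A.map Prod.snd := by
  rw [coeff_sumMonomials] at h
  obtain ⟨a, ha⟩ := Multiset.exists_mem_of_ne_zero (s := A.filter (·.2 = b)) fun h0 =>
    h (by simp [h0])
  rw [Multiset.mem_filter] at ha
  exact Multiset.mem_map.2 ⟨a, ha⟩

theorem coeff_sumMonomials_of_nodup [Semiring R] {A : Multiset (R × ℕ)}
    (hA : (A.map Prod.snd).Nodup) {a : R × ℕ} (ha : a ∈ A) :
    (sumMonomials A).coeff a.2 = a.1 := by
  have hcard : Multiset.card (A.filter (·.2 = a.2)) = 1 := by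
    rw [← Multiset.count_eq_one_of_mem hA (Multiset.mem_map_of_mem _ ha), Multiset.count_map]
    simp_rw [eq_comm]
  obtain ⟨a', ha'⟩ := Multiset.card_eq_one.1 hcard
  have : a ∈ A.filter (·.2 = a.2) := Multiset.mem_filter.2 ⟨ha, rfl⟩
  rw [ha', Multiset.mem_singleton] at this
  rw [coeff_sumMonomials, ha', this]
  simp

theorem aeval_sumMonomials [CommSemiring R] {S : Type*} [Semiring S] [Algebra R S]
    (A : Multiset (R × ℕ)) (x : S) :
    aeval x (sumMonomials A) = (A.map fun a => algebraMap R S a.1 * x ^ a.2).sum := by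
  simp [sumMonomials, map_multiset_sum, Multiset.map_map, aeval_monomial]

theorem sumMonomials_ne_zero_of_odd {A : Multiset (ℤ × ℕ)} (hA : ∀ a ∈ A, Odd a.1)
    (hcard : Odd (Multiset.card A)) : sumMonomials A ≠ 0 := by
  have hval : eval 1 (sumMonomials A) = (A.map Prod.fst).sum := by
    simp [sumMonomials, eval_multisetSum, Multiset.map_map]
  have hodd : Odd (eval 1 (sumMonomials A)) := by
    rw [hval, Multiset.odd_sum_iff_odd_card (by simpa using hA), Multiset.card_map]
    exact hcard
  intro h0
  rw [h0, eval_zero] at hodd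
  exact Int.not_odd_zero hodd

theorem coeff_eq_coeff_mod_of_X_pow_sub_one_mul_eq [Ring R] {P Q : R[X]} {M N : ℕ}
    (hQ : Q.natDegree < M) (h : (X ^ M - 1) * P = (X ^ N - 1) * Q) {b : ℕ} (hb : b < N) :
    P.coeff b = P.coeff (b % M) := by
  induction b using Nat.strong_induction_on with
  | _ b ih =>
    rcases lt_or_ge b M with hbM | hMb
    · rw [Nat.mod_eq_of_lt hbM]
    · have hcoeff := congrArg (coeff · b) h
      simp only [sub_mul, one_mul, coeff_sub, coeff_X_pow_mul', if_pos hMb,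
        if_neg (not_le.2 hb), coeff_eq_zero_of_natDegree_lt (hQ.trans_le hMb)] at hcoeff
      rw [Nat.mod_eq_sub_mod hMb, ← ih (b - M) (by omega) (by omega)]
      exact (sub_eq_zero.1 (hcoeff.trans (sub_zero 0))).symm

end Polynomial

namespace IsPrimitiveRoot

theorem exists_eq_intUnit_mul_pow {K : Type*} [CommRing K] [IsDomain K] {ω : K} {N : ℕ}
    (hω : IsPrimitiveRoot ω N) (hN : Odd N) {x : K} (hx : x ^ (2 * N) = 1) :
    ∃ (e : ℤˣ) (j : ℕ), j < N ∧ x = ((e : ℤ) : K) * ω ^ j := by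
  have : NeZero N := ⟨hN.pos.ne'⟩
  rcases mul_self_eq_one_iff.mp (by rwa [← pow_add, ← two_mul] : x ^ N * x ^ N = 1) with h | h
  · obtain ⟨j, hj, rfl⟩ := hω.eq_pow_of_pow_eq_one h
    exact ⟨1, j, hj, by simp⟩
  · have h' : (-x) ^ N = 1 := by rw [hN.neg_pow, h, neg_neg]
    obtain ⟨j, hj, hωj⟩ := hω.eq_pow_of_pow_eq_one h'
    exact ⟨-1, j, hj, by simp [hωj]⟩

variable {K : Type*} [Field K] [CharZero K] {p n : ℕ} {ω : K}

theorem coeff_eq_coeff_mod_of_aeval_eq_zero (hp : p.Prime)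
    (hω : IsPrimitiveRoot ω (p ^ (n + 1))) {P : ℤ[X]} (hP : aeval ω P = 0)
    (hdeg : P.natDegree < p ^ (n + 1)) {b : ℕ} (hb : b < p ^ (n + 1)) :
    P.coeff b = P.coeff (b % p ^ n) := by
  have : Fact p.Prime := ⟨hp⟩
  have hpos : 0 < p ^ (n + 1) := pow_pos hp.pos _
  obtain ⟨Q, rfl⟩ : cyclotomic (p ^ (n + 1)) ℤ ∣ P := by
    rw [cyclotomic_eq_minpoly hω hpos]
    exact minpoly.isIntegrallyClosed_dvd (hω.isIntegral hpos) hP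
  refine coeff_eq_coeff_mod_of_X_pow_sub_one_mul_eq (Q := Q) ?_ ?_ hb
  · rcases eq_or_ne Q 0 with rfl | hQ
    · simpa using pow_pos hp.pos n
    rw [natDegree_mul (cyclotomic_ne_zero _ ℤ) hQ, natDegree_cyclotomic,
      Nat.totient_prime_pow_succ hp, pow_succ, Nat.mul_sub_one] at hdeg
    have : p ^ n ≤ p ^ n * p := Nat.le_mul_of_pos_right _ hp.pos
    omega
  · rw [← cyclotomic_prime_pow_mul_X_pow_sub_one]
    ring

theorem exists_eq_map_range_of_aeval_sumMonomials_eq_zero (hp : p.Prime)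
    (hω : IsPrimitiveRoot ω (p ^ (n + 1))) {A : Multiset (ℤ × ℕ)}
    (hcard : Multiset.card A = p) (hA : ∀ a ∈ A, a.2 < p ^ (n + 1)) (hP0 : sumMonomials A ≠ 0)
    (hPω : aeval ω (sumMonomials A) = 0) :
    ∃ c : ℤ, ∃ r < p ^ n, A = (Multiset.range p).map fun i => (c, r + p ^ n * i) := by
  set P := sumMonomials A
  have hpn := pow_pos hp.pos n
  have hdeg : P.natDegree < p ^ (n + 1) := by
    obtain ⟨a, ha, hda⟩ := Multiset.mem_map.1
      (mem_map_snd_of_coeff_sumMonomials_ne_zero (leadingCoeff_ne_zero.2 hP0))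
    exact hda ▸ hA a ha
  set r := P.natDegree % p ^ n
  have hr : r < p ^ n := Nat.mod_lt _ hpn
  have hper : ∀ i < p, P.coeff (r + p ^ n * i) = P.leadingCoeff := by
    intro i hi
    have hlt : r + p ^ n * i < p ^ (n + 1) := by rw [pow_succ]; nlinarith
    rw [hω.coeff_eq_coeff_mod_of_aeval_eq_zero hp hPω hdeg hlt, Nat.add_mul_mod_self_left,
      Nat.mod_eq_of_lt hr]
    exact (hω.coeff_eq_coeff_mod_of_aeval_eq_zero hp hPω hdeg hdeg).symm
  have hSnodup : ((Multiset.range p).map fun i => r + p ^ n * i).Nodup :=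
    (Multiset.nodup_range p).map fun _ _ h =>
      Nat.eq_of_mul_eq_mul_left hpn (Nat.add_left_cancel h)
  -- the `p` exponents `r + p ^ n * i` all occur in `A`, which has only `p` elements
  have hS : ((Multiset.range p).map fun i => r + p ^ n * i) = A.map Prod.snd := by
    refine Multiset.eq_of_le_of_card_le ((Multiset.le_iff_subset hSnodup).2 ?_) (by simp [hcard])
    intro b hb
    obtain ⟨i, hi, rfl⟩ := Multiset.mem_map.1 hb
    exact mem_map_snd_of_coeff_sumMonomials_ne_zero
      ((hper i (Multiset.mem_range.1 hi)).symm ▸ leadingCoeff_ne_zero.2 hP0)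
  have hfst : ∀ a ∈ A, a.1 = P.leadingCoeff := fun a ha => by
    obtain ⟨i, hi, hia⟩ := Multiset.mem_map.1 (hS ▸ Multiset.mem_map_of_mem Prod.snd ha)
    rw [← coeff_sumMonomials_of_nodup (hS ▸ hSnodup) ha, ← hia,
      hper i (Multiset.mem_range.1 hi)]
  refine ⟨P.leadingCoeff, r, hr, ?_⟩
  calc A = (A.map Prod.snd).map fun b => (P.leadingCoeff, b) := by
        rw [Multiset.map_map]
        conv_lhs => rw [← Multiset.map_id A]
        exact Multiset.map_congr rfl fun a ha => Prod.ext (hfst a ha) rfl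
    _ = _ := by rw [← hS, Multiset.map_map]; rfl

theorem nodup_and_pow_eq_of_sum_eq_zero (hp : p.Prime) (hodd : Odd p)
    (hω : IsPrimitiveRoot ω (p ^ (n + 1))) {R : Multiset K} (hcard : Multiset.card R = p)
    (hsum : R.sum = 0) (hR : ∀ x ∈ R, x ^ (2 * p ^ (n + 1)) = 1) :
    R.Nodup ∧
      ∃ m < p ^ n, ∃ s : ℤˣ, ∀ x ∈ R, x ^ p = ((s : ℤ) : K) * ω ^ (m * p) := by
  choose! e j hj hx using fun x hx => hω.exists_eq_intUnit_mul_pow hodd.pow (hR x hx)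
  set A := R.map fun x => ((e x : ℤ), j x)
  have hPω : aeval ω (sumMonomials A) = 0 := by
    rw [aeval_sumMonomials, ← hsum, Multiset.map_map]
    conv_rhs => rw [← Multiset.map_id R]
    exact congrArg _ (Multiset.map_congr rfl fun x hxR => by simpa using (hx x hxR).symm)
  have hP0 : sumMonomials A ≠ 0 := by
    refine sumMonomials_ne_zero_of_odd ?_ (by simpa [A, hcard])
    simp only [A, Multiset.forall_mem_map_iff]
    intro x _
    rcases Int.units_eq_one_or (e x) with h | h <;> rw [h] <;> decide
  obtain ⟨c, r, hr, hA⟩ := hω.exists_eq_map_range_of_aeval_sumMonomials_eq_zero hp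
    (by simp [A, hcard]) (by simpa [A] using hj) hP0 hPω
  have hmem : ∀ x ∈ R, (e x : ℤ) = c ∧ ∃ i, r + p ^ n * i = j x := fun x hxR => by
    have hxA : ((e x : ℤ), j x) ∈ A := Multiset.mem_map_of_mem _ hxR
    rw [hA] at hxA
    obtain ⟨i, -, hi⟩ := Multiset.mem_map.1 hxA
    exact ⟨(Prod.ext_iff.1 hi).1.symm, i, (Prod.ext_iff.1 hi).2⟩
  obtain ⟨x₀, hx₀⟩ := Multiset.card_pos_iff_exists_mem.1 (hcard ▸ hp.pos)
  refine ⟨?_, r, hr, e x₀, fun x hxR => ?_⟩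
  · have hAnodup : A.Nodup := by
      rw [hA]
      exact (Multiset.nodup_range p).map fun _ _ h =>
        Nat.eq_of_mul_eq_mul_left (pow_pos hp.pos n) (Nat.add_left_cancel (Prod.ext_iff.1 h).2)
    exact hAnodup.of_map _
  obtain ⟨he, i, hij⟩ := hmem x hxR
  have hsign : ((e x : ℤ) : K) ^ p = (e x₀ : ℤ) := by
    rw [← Int.cast_pow, ← Units.val_pow_eq_pow_val, Int.units_pow_eq_pow_mod_two,
      Nat.odd_iff.1 hodd, pow_one, Units.ext (he.trans (hmem x₀ hx₀).1.symm)]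
  rw [hx x hxR, mul_pow, ← pow_mul, hsign, ← hij,
    show (r + p ^ n * i) * p = r * p + p ^ (n + 1) * i by ring, pow_add, pow_mul ω _ i,
    hω.pow_eq_one, one_pow, mul_one]

end IsPrimitiveRoot

namespace Module.End

variable {K V : Type*} [Field K] [AddCommGroup V] [Module K V] [FiniteDimensional K V]

theorem pow_eq_one_of_mem_roots_charpoly {T : Module.End K V} {d : ℕ} (hT : T ^ d = 1) {x : K}
    (hx : x ∈ T.charpoly.roots) : x ^ d = 1 := by
  have hx' := ((hasEigenvalue_iff_isRoot_charpoly T x).2 (isRoot_of_mem_roots hx)).pow d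
  obtain ⟨v, hv⟩ := hx'.exists_hasEigenvector
  have hvx := hv.apply_eq_smul
  rw [hT, one_apply] at hvx
  exact smul_left_injective K hv.2 (by simpa using hvx.symm)

theorem pow_finrank_eq_smul_one_of_nodup_roots_charpoly [IsAlgClosed K] [Nontrivial V]
    {T : Module.End K V} (hnodup : T.charpoly.roots.Nodup) {c : K}
    (h : ∀ x ∈ T.charpoly.roots, x ^ finrank K V = c) : T ^ finrank K V = c • 1 := by
  set d := finrank K V
  have hg : (X ^ d - C c).Monic := monic_X_pow_sub_C c Module.finrank_pos.ne'
  have hcard : Multiset.card T.charpoly.roots = d := by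
    rw [IsAlgClosed.card_roots_eq_natDegree, LinearMap.charpoly_natDegree]
  have hroots : T.charpoly.roots = (X ^ d - C c).roots := by
    refine Multiset.eq_of_le_of_card_le ((Multiset.le_iff_subset hnodup).2 fun x hx => ?_) ?_
    · simp [mem_roots hg.ne_zero, h x hx]
    · exact hcard ▸ (card_roots' _).trans natDegree_X_pow_sub_C.le
  have hχ : T.charpoly = X ^ d - C c := by
    rw [← prod_multiset_X_sub_C_of_monic_of_roots_card_eq T.charpoly_monic
      IsAlgClosed.card_roots_eq_natDegree, hroots,
      prod_multiset_X_sub_C_of_monic_of_roots_card_eq hg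
        (by rw [← hroots, hcard, natDegree_X_pow_sub_C])]
  have hCH := T.aeval_self_charpoly
  rwa [hχ, map_sub, map_pow, aeval_X, aeval_C, sub_eq_zero, Algebra.algebraMap_eq_smul_one] at hCH

end Module.End

theorem stmt_2 {k : Type*} [Field k] [IsAlgClosed k] [CharZero k]
    {V : Type*} [AddCommGroup V] [Module k V]
    (p : ℕ) (hp : p.Prime) (hodd : Odd p) (n : ℕ) (hn : 1 ≤ n)
    (ω : k) (hω : IsPrimitiveRoot ω (p ^ n))
    (hdim : Module.finrank k V = p)
    (T : Module.End k V) (hT : T ^ (2 * p ^ n) = 1)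
    (htr : LinearMap.trace k V T = 0) :
    ∃ m : ℕ, m ≤ p ^ (n - 1) - 1 ∧
      (T ^ p = (ω ^ (m * p)) • (1 : Module.End k V) ∨
       T ^ p = -((ω ^ (m * p)) • (1 : Module.End k V))) := by
  obtain ⟨n, rfl⟩ : ∃ n', n = n' + 1 := ⟨n - 1, by omega⟩
  have : FiniteDimensional k V := .of_finrank_pos (hdim ▸ hp.pos)
  have : Nontrivial V := Module.nontrivial_of_finrank_pos (hdim ▸ hp.pos)
  obtain ⟨hnodup, m, hm, s, hroots⟩ := hω.nodup_and_pow_eq_of_sum_eq_zero hp hodd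
    (R := T.charpoly.roots)
    (by rw [IsAlgClosed.card_roots_eq_natDegree, LinearMap.charpoly_natDegree, hdim])
    (by rw [← Module.End.trace_eq_sum_roots_charpoly_of_splits (IsAlgClosed.splits _), htr])
    fun x hx => Module.End.pow_eq_one_of_mem_roots_charpoly hT hx
  have hTp := Module.End.pow_finrank_eq_smul_one_of_nodup_roots_charpoly hnodup (hdim ▸ hroots)
  rw [hdim] at hTp
  refine ⟨m, by simpa using Nat.le_sub_one_of_lt hm, ?_⟩
  rcases Int.units_eq_one_or s with rfl | rfl
  · exact Or.inl (by simpa using hTp)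
  · exact Or.inr (by simpa using hTp)
end

section
/- Let $p$ be a prime and $\omega$ a primitive $p^n$-th root of unity in a field of characteristic zero ($n \ge 1$). If $P \in \mathbb{Z}[X]$ is a polynomial with $\deg P \le p^n - 1$, $P(\omega) = 0$, and $P$ has at most $p$ nonzero coefficients, then either $P = 0$, or there exists a unique $m$ with $0 \le m \le p^{n-1}-1$ and a nonzero integer $d$ such that $P(X) = d\, X^m \Phi_{p^n}(X)$, where $\Phi_{p^n}(X) = \sum_{j=0}^{p-1} X^{j p^{n-1}}$ is the $p^n$-th cyclotomic polynomial. -/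
/-!
Since `ω` is a root of `P`, its minimal polynomial `Φ_{p^n}` divides `P`, say `P = R Φ_{p^n}`, and
counting degrees gives `deg R < p^{n-1}`. As `Φ_{p^n} = ∑_{j<p} X^{j p^{n-1}}`, the product is a sum
of `p` shifted copies of `R` with disjoint supports, so `P` has `p` times as many nonzero
coefficients as `R`. Hence `R` is a monomial `d X^m`, and `m` is recovered as `deg R`.
-/

open Polynomial Finset

namespace Polynomial

section ShiftedCopies

variable {R : Type*} [Semiring R] {f : R[X]} {q : ℕ}

lemma coeff_mul_X_pow_mul_add_mul (hf : f.natDegree < q) {a : ℕ} (ha : a < q) (i j : ℕ) :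
    (f * X ^ (i * q)).coeff (a + j * q) = if i = j then f.coeff a else 0 := by
  rw [coeff_mul_X_pow']
  split_ifs with hle hij hij
  · subst hij; simp
  · have hij' : i < j := by
      by_contra! hji
      have := Nat.mul_le_mul_right q (Nat.lt_of_le_of_ne hji (Ne.symm hij))
      rw [Nat.succ_mul] at this
      omega
    have := Nat.mul_le_mul_right q hij'
    rw [Nat.succ_mul] at this
    exact coeff_eq_zero_of_natDegree_lt (by omega)
  · subst hij; omega
  · rfl

lemma coeff_mul_sum_X_pow_mul_add_mul (hf : f.natDegree < q) {p a j : ℕ} (ha : a < q)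
    (hj : j < p) :
    (f * ∑ i ∈ range p, X ^ (i * q)).coeff (a + j * q) = f.coeff a := by
  simp [mul_sum, coeff_mul_X_pow_mul_add_mul hf ha, hj]

lemma injOn_add_mul : Set.InjOn (fun x : ℕ × ℕ ↦ x.1 + x.2 * q) {x | x.1 < q} := by
  intro x hx y hy h
  have hmod := congrArg (· % q) h
  have hdiv := congrArg (· / q) h
  simp only [Nat.add_mul_mod_self_right, Nat.mod_eq_of_lt hx, Nat.mod_eq_of_lt hy] at hmod
  have hq : 0 < q := by exact (Nat.zero_le _).trans_lt hx
  simp only [Nat.add_mul_div_right _ _ hq, Nat.div_eq_of_lt hx, Nat.div_eq_of_lt hy] at hdiv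
  exact Prod.ext hmod (by simpa using hdiv)

lemma card_support_mul_sum_X_pow_mul (hf : f.natDegree < q) (p : ℕ) :
    #f.support * p ≤ #(f * ∑ i ∈ range p, X ^ (i * q)).support := by
  have hlt : ∀ a ∈ f.support, a < q := fun a ha ↦ (le_natDegree_of_mem_supp a ha).trans_lt hf
  calc #f.support * p = #(f.support ×ˢ range p) := by rw [card_product, card_range]
    _ ≤ _ := card_le_card_of_injOn (fun x ↦ x.1 + x.2 * q) (fun x hx ↦ ?_)
      (injOn_add_mul.mono fun x hx ↦ hlt _ (mem_product.mp hx).1)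
  obtain ⟨ha, hj⟩ := mem_product.mp hx
  rw [mem_coe, mem_support_iff, coeff_mul_sum_X_pow_mul_add_mul hf (hlt _ ha) (mem_range.mp hj)]
  exact mem_support_iff.mp ha

end ShiftedCopies

lemma cyclotomic_prime_pow_succ_eq_sum {R : Type*} [CommRing R] {p : ℕ} (hp : p.Prime) (n : ℕ) :
    cyclotomic (p ^ (n + 1)) R = ∑ i ∈ range p, X ^ (i * p ^ n) := by
  simp_rw [cyclotomic_prime_pow_eq_geom_sum hp, ← pow_mul, mul_comm]

lemma cyclotomic_dvd_of_aeval_eq_zero {k : Type*} [Field k] [CharZero k] {N : ℕ} (hN : 0 < N)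
    {ω : k} (hω : IsPrimitiveRoot ω N) {P : ℤ[X]} (hroot : aeval ω P = 0) :
    cyclotomic N ℤ ∣ P :=
  cyclotomic_eq_minpoly hω hN ▸ minpoly.isIntegrallyClosed_dvd (hω.isIntegral hN) hroot

theorem exists_eq_C_mul_X_pow_mul_cyclotomic_of_card_support_le {k : Type*} [Field k]
    [CharZero k] {p n : ℕ} (hp : p.Prime) {ω : k} (hω : IsPrimitiveRoot ω (p ^ (n + 1)))
    {P : ℤ[X]} (hP : P ≠ 0) (hdeg : P.natDegree < p ^ (n + 1)) (hroot : aeval ω P = 0)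
    (hsupp : #P.support ≤ p) :
    ∃ m < p ^ n, ∃ d ≠ 0, P = C d * X ^ m * cyclotomic (p ^ (n + 1)) ℤ := by
  obtain ⟨R, rfl⟩ := cyclotomic_dvd_of_aeval_eq_zero (pow_pos hp.pos _) hω hroot
  have hR : R ≠ 0 := right_ne_zero_of_mul hP
  have hRdeg : R.natDegree < p ^ n := by
    have hsplit : p ^ (n + 1) = p ^ n * (p - 1) + p ^ n := by
      rw [pow_succ, ← Nat.mul_succ, Nat.succ_eq_add_one, Nat.sub_add_cancel hp.one_le]
    rw [natDegree_mul (cyclotomic_ne_zero _ ℤ) hR, natDegree_cyclotomic,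
      Nat.totient_prime_pow_succ hp] at hdeg
    omega
  have hcard : #R.support ≤ 1 := by
    have h := card_support_mul_sum_X_pow_mul hRdeg p
    rw [← cyclotomic_prime_pow_succ_eq_sum hp, mul_comm R] at h
    exact Nat.le_of_mul_le_mul_right (by simpa using h.trans hsupp) hp.pos
  obtain ⟨m, d, hd, rfl⟩ := card_support_eq_one.mp
    (hcard.antisymm (card_pos.mpr (support_nonempty.mpr hR)))
  exact ⟨m, by rwa [natDegree_C_mul_X_pow m d hd] at hRdeg, d, hd, mul_comm _ _⟩

end Polynomial

theorem stmt_3 {k : Type*} [Field k] [CharZero k]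
    (p : ℕ) (hp : p.Prime) (n : ℕ) (hn : 1 ≤ n)
    (ω : k) (hω : IsPrimitiveRoot ω (p ^ n))
    (P : Polynomial ℤ)
    (hdeg : P.degree ≤ ((p ^ n - 1 : ℕ) : WithBot ℕ))
    (hroot : Polynomial.aeval ω P = 0)
    (hsupp : P.support.card ≤ p) :
    P = 0 ∨ ∃! m : ℕ, m ≤ p ^ (n - 1) - 1 ∧ ∃ d : ℤ, d ≠ 0 ∧
      P = Polynomial.C d * Polynomial.X ^ m *
        (∑ j ∈ Finset.range p, Polynomial.X ^ (j * p ^ (n - 1))) := by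
  refine or_iff_not_imp_left.mpr fun hP ↦ ?_
  obtain ⟨n, rfl⟩ : ∃ n', n = n' + 1 := ⟨n - 1, by omega⟩
  have hdeg' : P.natDegree < p ^ (n + 1) := by
    have := natDegree_le_iff_degree_le.mpr hdeg
    have := pow_pos hp.pos (n + 1)
    omega
  obtain ⟨m, hm, d, hd, rfl⟩ :=
    exists_eq_C_mul_X_pow_mul_cyclotomic_of_card_support_le hp hω hP hdeg' hroot hsupp
  simp_rw [Nat.add_sub_cancel, ← cyclotomic_prime_pow_succ_eq_sum hp]
  refine ⟨m, ⟨by omega, d, hd, rfl⟩, fun m' ⟨_, d', hd', h⟩ ↦ ?_⟩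
  have h := congrArg natDegree (mul_right_cancel₀ (cyclotomic_ne_zero _ ℤ) h)
  rwa [natDegree_C_mul_X_pow m d hd, natDegree_C_mul_X_pow m' d' hd', eq_comm] at h
end

section
/- Let $k$ be a field, $\Gamma$ a group, and $H = A *_\sigma \Gamma$ a crossed product that is a $\Gamma$-graded algebra with an invertible element $u_g = 1 * g$ in each component $g$. If $I \subseteq A$ is an ideal of the neutral component stable under the weak action (i.e., $u_g I u_g^{-1} \subseteq I$ for all $g \in \Gamma$) and $I$ is nilpotent in $A$, then $I *_\sigma \Gamma := I \otimes k[\Gamma] \subseteq H$ is a nilpotent two-sided ideal of $H$, and $H/(I *_\sigma \Gamma)$ is again a crossed product $(A/I) *_{\bar\sigma} \Gamma$. -/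
/-!
Every coefficient of a product of `n` elements of `I *_σ Γ` lies in `I ^ n`: the weak action
preserves the powers of `I`, and the cocycle values only multiply from the right. Hence
`(I *_σ Γ) ^ N0 = 0`. The weak action and the cocycle descend to `A/I`, and reducing
coefficients modulo `I` is compatible with the crossed-product multiplication.
-/

/-- The multiplication of the crossed product `A *_σ Γ`, realized on the function space
`Γ → A` (which is `A ⊗ k[Γ]` for finite `Γ`): `(a * g)(c * h) = a (g⋅c) σ(g,h) * gh`. -/
noncomputable def crossedMul {k A Γ : Type*} [Field k] [Ring A] [Algebra k A]
    [Group Γ] [Fintype Γ] (φ : Γ → (A →ₐ[k] A)) (σ : Γ → Γ → Aˣ)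
    (f g : Γ → A) : Γ → A :=
  fun x => ∑ y : Γ, f y * φ y (g (y⁻¹ * x)) * (σ y (y⁻¹ * x) : A)

/-- The unit of the crossed product `A *_σ Γ` on the function space model. -/
noncomputable def crossedOne {k A Γ : Type*} [Field k] [Ring A] [Algebra k A]
    [Group Γ] [DecidableEq Γ] : Γ → A :=
  fun x => if x = 1 then 1 else 0

theorem Ideal.pow_le_comap_pow_of_le_comap {R S : Type*} [Semiring R] [Semiring S]
    (f : R →+* S) {I : Ideal R} {K : Ideal S} (h : I ≤ K.comap f) (n : ℕ) :
    I ^ n ≤ (K ^ n).comap f := by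
  induction n with
  | zero => simp only [Submodule.pow_zero, Ideal.one_eq_top, Ideal.comap_top, le_refl]
  | succ n ih =>
    rw [Submodule.pow_succ, Submodule.mul_le]
    intro a ha b hb
    rw [Ideal.mem_comap, map_mul, Submodule.pow_succ]
    exact Ideal.mul_mem_mul (ih ha) (h hb)

def TwoSidedIdeal.quotientMap {R S : Type*} [Ring R] [Ring S] (I : TwoSidedIdeal R)
    (J : TwoSidedIdeal S) (f : R →+* S) (hf : ∀ x ∈ I, f x ∈ J) :
    I.ringCon.Quotient →+* J.ringCon.Quotient :=
  I.ringCon.lift (J.ringCon.mk'.comp f) fun a b hab =>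
    (RingCon.eq _).mpr <| (J.rel_iff _ _).mpr <| map_sub f a b ▸ hf _ ((I.rel_iff a b).mp hab)

theorem TwoSidedIdeal.quotientMap_mk' {R S : Type*} [Ring R] [Ring S] (I : TwoSidedIdeal R)
    (J : TwoSidedIdeal S) (f : R →+* S) (hf : ∀ x ∈ I, f x ∈ J) (a : R) :
    I.quotientMap J f hf (I.ringCon.mk' a) = J.ringCon.mk' (f a) :=
  rfl

section CrossedProduct

variable {k A Γ : Type*} [Field k] [Ring A] [Algebra k A] [Group Γ] [Fintype Γ]
  (φ : Γ → (A →ₐ[k] A)) (σ : Γ → Γ → Aˣ)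

theorem crossedMul_mem_mul {J K : Ideal A} [K.IsTwoSided] (hK : ∀ g, K ≤ K.comap (φ g))
    {f f' : Γ → A} (hf : ∀ x, f x ∈ J) (hf' : ∀ x, f' x ∈ K) (x : Γ) :
    crossedMul φ σ f f' x ∈ J * K :=
  Submodule.sum_mem _ fun y _ =>
    Ideal.mul_mem_right _ _ (Ideal.mul_mem_mul (hf y) (hK y (hf' _)))

theorem foldr_crossedMul_mem_pow [DecidableEq Γ] {J : Ideal A} [J.IsTwoSided]
    (hJ : ∀ g, J ≤ J.comap (φ g)) (fs : List (Γ → A)) (hfs : ∀ f ∈ fs, ∀ x, f x ∈ J)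
    (x : Γ) : fs.foldr (crossedMul φ σ) (crossedOne (k := k)) x ∈ J ^ fs.length := by
  induction fs generalizing x with
  | nil =>
    rw [List.length_nil, Submodule.pow_zero, Ideal.one_eq_top]
    exact Submodule.mem_top
  | cons f fs ih =>
    rw [List.length_cons, Ideal.IsTwoSided.pow_succ]
    exact crossedMul_mem_mul φ σ
      (fun g => Ideal.pow_le_comap_pow_of_le_comap (φ g : A →+* A) (hJ g) _)
      (hfs f List.mem_cons_self) (ih fun g hg => hfs g (List.mem_cons_of_mem f hg))
      x

theorem map_crossedMul {B : Type*} [Ring B] (π : A →+* B) (ψ : Γ → B →+* B)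
    (hψ : ∀ g a, ψ g (π a) = π (φ g a)) (f f' : Γ → A) (x : Γ) :
    π (crossedMul φ σ f f' x) =
      ∑ y : Γ, π (f y) * ψ y (π (f' (y⁻¹ * x))) * π (σ y (y⁻¹ * x)) := by
  simp only [crossedMul, map_sum, map_mul, hψ]

end CrossedProduct

theorem stmt_19_general {k A Γ : Type*} [Field k] [Ring A] [Algebra k A]
    [Group Γ] [Fintype Γ] [DecidableEq Γ]
    -- the weak action of `Γ` on `A` (each group element acts by an algebra endomorphism)
    (φ : Γ → (A →ₐ[k] A))
    -- the convolution invertible normalized `2`-cocycle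
    (σ : Γ → Γ → Aˣ)
    -- `I` is a nilpotent two-sided ideal of the neutral component `A`,
    -- stable under the weak action
    (I : TwoSidedIdeal A) (N0 : ℕ) (hnil : I.asIdeal ^ N0 = ⊥)
    (hstable : ∀ g : Γ, ∀ x ∈ I, φ g x ∈ I) :
    -- (1) `I *_σ Γ = {f : Γ → A | ∀ x, f x ∈ I}` is a two-sided ideal of `A *_σ Γ`
    ((∀ f g : Γ → A, (∀ x, f x ∈ I) → (∀ x, g x ∈ I) → ∀ x, (f + g) x ∈ I) ∧
      ∀ f : Γ → A, (∀ x, f x ∈ I) → ∀ h : Γ → A,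
        (∀ x, crossedMul φ σ h f x ∈ I) ∧ (∀ x, crossedMul φ σ f h x ∈ I)) ∧
    -- (2) `I *_σ Γ` is nilpotent
    (∃ N : ℕ, ∀ fs : List (Γ → A), fs.length = N → (∀ f ∈ fs, ∀ x, f x ∈ I) →
      fs.foldr (crossedMul φ σ) (crossedOne (k := k)) = 0) ∧
    -- (3) the quotient `(A *_σ Γ)/(I *_σ Γ)` is again the crossed product
    -- `(A/I) *_σ̄ Γ`, for the induced weak action and cocycle on `A/I`:
    -- the componentwise quotient map intertwines `crossedMul` with the
    -- crossed-product multiplication of the induced data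
    (∃ (φbar : Γ → (I.ringCon.Quotient →+* I.ringCon.Quotient))
       (σbar : Γ → Γ → (I.ringCon.Quotient)ˣ),
      (∀ (g : Γ) (a : A), φbar g (I.ringCon.mk' a) = I.ringCon.mk' (φ g a)) ∧
      (∀ g h : Γ, (σbar g h : I.ringCon.Quotient) = I.ringCon.mk' (σ g h)) ∧
      (∀ f f' : Γ → A, ∀ x : Γ,
        I.ringCon.mk' (crossedMul φ σ f f' x) =
          ∑ y : Γ, I.ringCon.mk' (f y) * φbar y (I.ringCon.mk' (f' (y⁻¹ * x))) *
            (σbar y (y⁻¹ * x) : I.ringCon.Quotient))) := by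
  have hI : ∀ g, I.asIdeal ≤ I.asIdeal.comap (φ g) := fun g x hx =>
    TwoSidedIdeal.mem_asIdeal.mpr (hstable g x (TwoSidedIdeal.mem_asIdeal.mp hx))
  have hTop : ∀ g, (⊤ : Ideal A) ≤ (⊤ : Ideal A).comap (φ g) := fun _ _ _ => trivial
  have hmem {f : Γ → A} (hf : ∀ x, f x ∈ I) (x : Γ) : f x ∈ I.asIdeal :=
    TwoSidedIdeal.mem_asIdeal.mpr (hf x)
  refine ⟨⟨fun f g hf hg x => I.add_mem (hf x) (hg x), fun f hf c => ⟨fun x => ?_, fun x => ?_⟩⟩,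
    ⟨N0, fun fs hlen hfs => funext fun x => ?_⟩, ?_⟩
  · have h := crossedMul_mem_mul φ σ (f := c) hI (fun _ => Submodule.mem_top) (hmem hf) x
    exact TwoSidedIdeal.mem_asIdeal.mp (Ideal.mul_le_right h)
  · have h := crossedMul_mem_mul φ σ (f' := c) hTop (hmem hf) (fun _ => Submodule.mem_top) x
    exact TwoSidedIdeal.mem_asIdeal.mp (Ideal.mul_le_left h)
  · have h := foldr_crossedMul_mem_pow φ σ hI fs (fun f hf => hmem (hfs f hf)) x
    rwa [hlen, hnil, Submodule.mem_bot] at h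
  · let φbar g := I.quotientMap I (φ g) (hstable g)
    have hφbar (g : Γ) (a : A) : φbar g (I.ringCon.mk' a) = I.ringCon.mk' (φ g a) :=
      I.quotientMap_mk' I _ _ a
    exact ⟨φbar, fun g h => Units.map I.ringCon.mk'.toMonoidHom (σ g h),
      hφbar, fun g h => rfl, map_crossedMul φ σ _ φbar hφbar⟩

theorem stmt_19 {k A Γ : Type*} [Field k] [Ring A] [Algebra k A]
    [FiniteDimensional k A] [Group Γ] [Fintype Γ] [DecidableEq Γ]
    -- the weak action of `Γ` on `A` (each group element acts by an algebra endomorphism)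
    (φ : Γ → (A →ₐ[k] A)) (hφ1 : φ 1 = AlgHom.id k A)
    -- the convolution invertible normalized `2`-cocycle
    (σ : Γ → Γ → Aˣ)
    (hσnorm : ∀ g, σ g 1 = 1 ∧ σ 1 g = 1)
    (hcoc : ∀ g h l : Γ, φ g (σ h l) * (σ g (h * l) : A) = (σ g h : A) * (σ (g * h) l : A))
    (htwist : ∀ (g h : Γ) (a : A), φ g (φ h a) * (σ g h : A) = (σ g h : A) * φ (g * h) a)
    -- `I` is a nilpotent two-sided ideal of the neutral component `A`,
    -- stable under the weak action
    (I : TwoSidedIdeal A) (N0 : ℕ) (hnil : I.asIdeal ^ N0 = ⊥)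
    (hstable : ∀ g : Γ, ∀ x ∈ I, φ g x ∈ I) :
    -- (1) `I *_σ Γ = {f : Γ → A | ∀ x, f x ∈ I}` is a two-sided ideal of `A *_σ Γ`
    ((∀ f g : Γ → A, (∀ x, f x ∈ I) → (∀ x, g x ∈ I) → ∀ x, (f + g) x ∈ I) ∧
      ∀ f : Γ → A, (∀ x, f x ∈ I) → ∀ h : Γ → A,
        (∀ x, crossedMul φ σ h f x ∈ I) ∧ (∀ x, crossedMul φ σ f h x ∈ I)) ∧
    -- (2) `I *_σ Γ` is nilpotent
    (∃ N : ℕ, ∀ fs : List (Γ → A), fs.length = N → (∀ f ∈ fs, ∀ x, f x ∈ I) →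
      fs.foldr (crossedMul φ σ) (crossedOne (k := k)) = 0) ∧
    -- (3) the quotient `(A *_σ Γ)/(I *_σ Γ)` is again the crossed product
    -- `(A/I) *_σ̄ Γ`, for the induced weak action and cocycle on `A/I`:
    -- the componentwise quotient map intertwines `crossedMul` with the
    -- crossed-product multiplication of the induced data
    (∃ (φbar : Γ → (I.ringCon.Quotient →+* I.ringCon.Quotient))
       (σbar : Γ → Γ → (I.ringCon.Quotient)ˣ),
      (∀ (g : Γ) (a : A), φbar g (I.ringCon.mk' a) = I.ringCon.mk' (φ g a)) ∧
      (∀ g h : Γ, (σbar g h : I.ringCon.Quotient) = I.ringCon.mk' (σ g h)) ∧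
      (∀ f f' : Γ → A, ∀ x : Γ,
        I.ringCon.mk' (crossedMul φ σ f f' x) =
          ∑ y : Γ, I.ringCon.mk' (f y) * φbar y (I.ringCon.mk' (f' (y⁻¹ * x))) *
            (σbar y (y⁻¹ * x) : I.ringCon.Quotient))) :=
  stmt_19_general φ σ I N0 hnil hstable
end
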